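/- In the sub-affine λ¢, subject reduction holds: if Γ ⊢ t : A and t →_p r (a one-step probabilistic reduction), then Γ ⊢ r : A. -/

import Mathlib

/-- Terms of λ¢ (de Bruijn): variables, abstraction, application,
    booleans `one`/`zero`, if-then-else, and a coin. -/
inductive Tm : Type
  | var : Nat → Tm
  | lam : Tm → Tm
  | app : Tm → Tm → Tm
  | one : Tm
  | zero : Tm
  | ite : Tm → Tm → Tm → Tm
  | coin : Tm
  deriving DecidableEq

/-- Lifting of de Bruijn indices (indices ≥ d are incremented). -/
def lift (d : Nat) : Tm → Tm
  | .var n => if n < d then .var n else .var (n+1)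
  | .lam t => .lam (lift (d+1) t)
  | .app t u => .app (lift d t) (lift d u)
  | .one => .one
  | .zero => .zero
  | .ite c a b => .ite (lift d c) (lift d a) (lift d b)
  | .coin => .coin

/-- Capture-avoiding substitution `t[s/k]` (de Bruijn). -/
def subst : Tm → Nat → Tm → Tm
  | .var n, k, s => if n = k then s else if k < n then .var (n-1) else .var n
  | .lam t, k, s => .lam (subst t (k+1) (lift 0 s))
  | .app t u, k, s => .app (subst t k s) (subst u k s)
  | .one, _, _ => .one
  | .zero, _, _ => .zero
  | .ite c a b, k, s => .ite (subst c k s) (subst a k s) (subst b k s)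
  | .coin, _, _ => .coin

/-- One-step probabilistic reduction `t →_p r` of λ¢:
    β, if-rules (probability 1), coin toss (probability 1/2 each),
    closed under all contexts. -/
inductive Step : Tm → ℚ → Tm → Prop
  | beta (t r) : Step (.app (.lam t) r) 1 (subst t 0 r)
  | iteOne (a b) : Step (.ite .one a b) 1 a
  | iteZero (a b) : Step (.ite .zero a b) 1 b
  | coinOne : Step .coin (1/2) .one
  | coinZero : Step .coin (1/2) .zero
  | lam {t p t'} : Step t p t' → Step (.lam t) p (.lam t')
  | appL {t p t'} (u) : Step t p t' → Step (.app t u) p (.app t' u)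
  | appR {u p u'} (t) : Step u p u' → Step (.app t u) p (.app t u')
  | iteC {c p c'} (a b) : Step c p c' → Step (.ite c a b) p (.ite c' a b)
  | iteA {a p a'} (c b) : Step a p a' → Step (.ite c a b) p (.ite c a' b)
  | iteB {b p b'} (c a) : Step b p b' → Step (.ite c a b) p (.ite c a b')

/-- A term is normal if no probabilistic step applies. -/
def NormalTm (t : Tm) : Prop := ¬ ∃ p r, Step t p r

/-- (Sub)probability distributions over terms, as finitely supported maps. -/
abbrev PDist := Tm →₀ ℚ

/-- Contraction of one redex occurrence of a term, producing the
    distribution of its results: deterministic rules give a Dirac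
    distribution, a coin redex splits 1/2–1/2; closed under contexts. -/
inductive TStep : Tm → PDist → Prop
  | beta (t r) : TStep (.app (.lam t) r) (Finsupp.single (subst t 0 r) 1)
  | iteOne (a b) : TStep (.ite .one a b) (Finsupp.single a 1)
  | iteZero (a b) : TStep (.ite .zero a b) (Finsupp.single b 1)
  | coin : TStep .coin (Finsupp.single Tm.one (1/2) + Finsupp.single Tm.zero (1/2))
  | lam {t D} : TStep t D → TStep (.lam t) (D.mapDomain .lam)
  | appL {t D} (u) : TStep t D → TStep (.app t u) (D.mapDomain (fun s => .app s u))
  | appR {u D} (t) : TStep u D → TStep (.app t u) (D.mapDomain (fun s => .app t s))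
  | iteC {c D} (a b) : TStep c D → TStep (.ite c a b) (D.mapDomain (fun s => .ite s a b))
  | iteA {a D} (c b) : TStep a D → TStep (.ite c a b) (D.mapDomain (fun s => .ite c s b))
  | iteB {b D} (c a) : TStep b D → TStep (.ite c a b) (D.mapDomain (fun s => .ite c a s))

/-- One distribution-reduction step: pick a term `t` in the support,
    contract one redex occurrence of `t` and redistribute its probability
    mass accordingly (equal results are merged by the `Finsupp` addition). -/
def DStep (D D' : PDist) : Prop :=
  ∃ t E, D t ≠ 0 ∧ TStep t E ∧ D' = D.erase t + D t • E

/-- Multistep distribution reduction. -/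
def DSteps : PDist → PDist → Prop := Relation.ReflTransGen DStep

/-- A distribution is normal when every term in its support is normal. -/
def NormalDist (D : PDist) : Prop := ∀ t ∈ D.support, NormalTm t

/-- Simple types: booleans and arrows. -/
inductive Ty : Type
  | bool : Ty
  | arrow : Ty → Ty → Ty
  deriving DecidableEq

/-- Typing contexts for the (sub-)affine systems: a partial assignment of
    types to de Bruijn indices. -/
abbrev Ctx := Nat → Option Ty

/-- Extend a context with a (possibly absent) type for the new index 0. -/
def Ctx.cons (A : Option Ty) (Γ : Ctx) : Ctx := fun n =>
  match n with
  | 0 => A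
  | m+1 => Γ m

/-- Disjointness of contexts. -/
def Ctx.disj (Γ Δ : Ctx) : Prop := ∀ n, Γ n = none ∨ Δ n = none

/-- Union of (disjoint) contexts. -/
def Ctx.union (Γ Δ : Ctx) : Ctx := fun n => (Γ n).orElse (fun _ => Δ n)

/-- The empty context. -/
def Ctx.empty : Ctx := fun _ => none

/-- Sub-affine type system: affine, except that the two branches of an
    if-then-else may share their typing context. -/
inductive SubTy : Ctx → Tm → Ty → Prop
  | var {Γ n A} : Γ n = some A → SubTy Γ (.var n) A
  | lam {Γ t A B} : SubTy (Ctx.cons (some A) Γ) t B → SubTy Γ (.lam t) (.arrow A B)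
  | app {Γ Δ t u A B} : Ctx.disj Γ Δ →
      SubTy Γ t (.arrow A B) → SubTy Δ u A → SubTy (Ctx.union Γ Δ) (.app t u) B
  | one {Γ} : SubTy Γ .one .bool
  | zero {Γ} : SubTy Γ .zero .bool
  | coin {Γ} : SubTy Γ .coin .bool
  | ite {Γ Δ c a b A} : Ctx.disj Γ Δ →
      SubTy Γ c .bool → SubTy Δ a A → SubTy Δ b A →
      SubTy (Ctx.union Γ Δ) (.ite c a b) A

/-! Inverting the typing derivation at the redex settles every case but β, which needs the
substitution lemma, and the `if` rules, whose surviving branch is typed in only part of the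
context and so needs weakening. Substitution is proved at an arbitrary de Bruijn index, together
with strengthening, since under a binder the index moves and the substituted term is lifted. -/

namespace Ctx

def Subset (Γ Γ' : Ctx) : Prop := ∀ n A, Γ n = some A → Γ' n = some A

def diff (Γ' Γ : Ctx) : Ctx := fun n => if Γ n = none then Γ' n else none

/-- The share of `Γ` in the context of `t[s/k]` when `t` is typed in `Γ`. -/
def remove (Γ : Ctx) (k : Nat) : Ctx := fun n => if n < k then Γ n else Γ (n + 1)

/-- The context of `lift d t` when `t` is typed in `Γ`. -/
def liftAt (d : Nat) (Γ : Ctx) : Ctx := fun n =>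
  if n < d then Γ n else if n = d then none else Γ (n - 1)

variable {Γ Γ' Γ'' Δ Δ' : Ctx} {n : Nat} {A : Ty}

theorem Subset.refl (Γ : Ctx) : Subset Γ Γ := fun _ _ => id

theorem Subset.trans (h : Subset Γ Γ') (h' : Subset Γ' Γ'') : Subset Γ Γ'' :=
  fun n A hA => h' n A (h n A hA)

theorem union_apply_of_some (h : Γ n = some A) : union Γ Δ n = some A := by
  simp [union, h]

theorem union_apply_of_none (h : Γ n = none) : union Γ Δ n = Δ n := by
  simp [union, h]

theorem disj_comm : disj Γ Δ ↔ disj Δ Γ :=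
  ⟨fun h n => (h n).symm, fun h n => (h n).symm⟩

theorem disj_empty : disj Γ empty := fun _ => Or.inr rfl

theorem union_eq_none_iff : union Γ Δ n = none ↔ Γ n = none ∧ Δ n = none := by
  cases h : Γ n <;> simp [union, h]

theorem disj_union_left : disj (union Γ Γ') Δ ↔ disj Γ Δ ∧ disj Γ' Δ := by
  simp only [disj, union_eq_none_iff, and_or_right, forall_and]

theorem disj_union_right : disj Γ (union Δ Δ') ↔ disj Γ Δ ∧ disj Γ Δ' := by
  rw [disj_comm, disj_union_left, disj_comm, @disj_comm Δ']

theorem union_empty (Γ : Ctx) : union Γ empty = Γ := by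
  funext n; simp only [union]; cases Γ n <;> rfl

theorem union_assoc (Γ Δ Θ : Ctx) : union (union Γ Δ) Θ = union Γ (union Δ Θ) := by
  funext n; simp only [union]; cases Γ n <;> rfl

theorem union_comm (h : disj Γ Δ) : union Γ Δ = union Δ Γ := by
  funext n; simp only [union]; rcases h n with h | h <;> simp [h]

theorem subset_union_left : Subset Γ (union Γ Δ) := fun _ _ => union_apply_of_some

theorem subset_union_right (h : disj Γ Δ) : Subset Δ (union Γ Δ) := by
  rw [union_comm h]; exact subset_union_left

theorem disj_diff : disj Γ (diff Γ' Γ) := by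
  intro n; by_cases h : Γ n = none <;> simp [diff, h]

theorem union_diff (h : Subset Γ Γ') : union Γ (diff Γ' Γ) = Γ' := by
  funext n
  cases hΓ : Γ n with
  | none => simp [union, diff, hΓ]
  | some A => simp [union, hΓ, h n A hΓ]

theorem subset_diff (hd : disj Γ Δ) (h : Subset Δ Γ') : Subset Δ (diff Γ' Γ) := by
  intro n A hA
  have hΓ : Γ n = none := (hd n).resolve_right (by simp [hA])
  simp [diff, hΓ, h n A hA]

theorem subset_cons {a : Option Ty} (h : Subset Γ Γ') : Subset (cons a Γ) (cons a Γ') := by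
  rintro (_ | n) A hA
  exacts [hA, h n A hA]

theorem disj_cons_none {a : Option Ty} (h : disj Γ Δ) : disj (cons a Γ) (cons none Δ) := by
  rintro (_ | n)
  exacts [Or.inr rfl, h n]

theorem union_cons_none (a : Option Ty) (Γ Δ : Ctx) :
    union (cons a Γ) (cons none Δ) = cons a (union Γ Δ) := by
  funext n; cases n with
  | zero => cases a <;> rfl
  | succ n => rfl

theorem remove_apply_of_lt {k : Nat} (h : n < k) : remove Γ k n = Γ n := by
  simp [remove, h]

theorem remove_apply_pred {k : Nat} (h : k < n) : remove Γ k (n - 1) = Γ n := by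
  simp only [remove, show ¬n - 1 < k by omega, if_false, show n - 1 + 1 = n by omega]

theorem remove_cons_succ (a : Option Ty) (Γ : Ctx) (k : Nat) :
    remove (cons a Γ) (k + 1) = cons a (remove Γ k) := by
  funext n; cases n with
  | zero => rfl
  | succ n => simp only [remove, cons, Nat.add_lt_add_iff_right]

theorem remove_union (Γ Δ : Ctx) (k : Nat) :
    remove (union Γ Δ) k = union (remove Γ k) (remove Δ k) := by
  funext n; simp only [remove, union]; split_ifs <;> rfl

theorem remove_disj (k : Nat) (h : disj Γ Δ) : disj (remove Γ k) (remove Δ k) := by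
  intro n; simp only [remove]; split_ifs
  exacts [h n, h (n + 1)]

theorem liftAt_apply_of_lt {d : Nat} (h : n < d) : liftAt d Γ n = Γ n := by
  simp [liftAt, h]

theorem liftAt_apply_succ {d : Nat} (h : d ≤ n) : liftAt d Γ (n + 1) = Γ n := by
  simp [liftAt, show ¬n + 1 < d by omega, show n + 1 ≠ d by omega]

theorem liftAt_zero (Γ : Ctx) : liftAt 0 Γ = cons none Γ := by
  funext n; cases n <;> simp [liftAt, cons]

theorem liftAt_cons_succ (a : Option Ty) (Γ : Ctx) (d : Nat) :
    liftAt (d + 1) (cons a Γ) = cons a (liftAt d Γ) := by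
  funext n; cases n with
  | zero => simp [liftAt, cons]
  | succ n =>
      simp only [liftAt, cons, Nat.add_lt_add_iff_right, Nat.add_right_cancel_iff]
      split_ifs
      · rfl
      · rfl
      · obtain ⟨m, rfl⟩ : ∃ m, n = m + 1 := ⟨n - 1, by omega⟩
        rfl

theorem liftAt_union (d : Nat) (Γ Δ : Ctx) :
    liftAt d (union Γ Δ) = union (liftAt d Γ) (liftAt d Δ) := by
  funext n; simp only [liftAt, union]; split_ifs <;> rfl

theorem liftAt_disj (d : Nat) (h : disj Γ Δ) : disj (liftAt d Γ) (liftAt d Δ) := by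
  intro n; simp only [liftAt]; split_ifs
  exacts [h n, Or.inl rfl, h (n - 1)]

/-- Since application and `if` split their context disjointly, the context `Δ` of a substituted
term goes entirely to the premise whose context contains index `k`; the other premise gets the
empty context. -/
theorem exists_split_remove {Γ₁ Γ₂ : Ctx} {k : Nat} {P : Ctx → Ty → Prop} (hd : disj Γ₁ Γ₂)
    (hP : ∀ A, union Γ₁ Γ₂ k = some A → P Δ A) (hΔ : disj (remove (union Γ₁ Γ₂) k) Δ) :
    ∃ Δ₁ Δ₂, ((∀ A, Γ₁ k = some A → P Δ₁ A) ∧ disj (remove Γ₁ k) Δ₁) ∧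
      ((∀ A, Γ₂ k = some A → P Δ₂ A) ∧ disj (remove Γ₂ k) Δ₂) ∧
      disj (union (remove Γ₁ k) Δ₁) (union (remove Γ₂ k) Δ₂) ∧
      union (union (remove Γ₁ k) Δ₁) (union (remove Γ₂ k) Δ₂) =
        union (remove (union Γ₁ Γ₂) k) Δ := by
  rw [remove_union, disj_union_left] at hΔ
  obtain ⟨hΔ₁, hΔ₂⟩ := hΔ
  have hR := remove_disj k hd
  rw [remove_union]
  by_cases h₁ : Γ₁ k = none
  · refine ⟨empty, Δ, ⟨by simp [h₁], disj_empty⟩,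
      ⟨fun A hA => hP A (by rwa [union_apply_of_none h₁]), hΔ₂⟩, ?_, ?_⟩
    · rw [union_empty, disj_union_right]; exact ⟨hR, hΔ₁⟩
    · rw [union_empty, union_assoc]
  · have h₂ : Γ₂ k = none := (hd k).resolve_left h₁
    refine ⟨Δ, empty, ⟨fun A hA => hP A (union_apply_of_some hA), hΔ₁⟩,
      ⟨by simp [h₂], disj_empty⟩, ?_, ?_⟩
    · rw [union_empty, disj_union_left]; exact ⟨hR, disj_comm.1 hΔ₂⟩
    · rw [union_empty, union_assoc, ← union_comm hΔ₂, ← union_assoc]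

end Ctx

namespace SubTy

variable {Γ Δ : Ctx} {t r : Tm} {A B : Ty}

theorem weaken {Γ' : Ctx} (h : SubTy Γ t A) (hsub : Ctx.Subset Γ Γ') : SubTy Γ' t A := by
  induction h generalizing Γ' with
  | var h => exact .var (hsub _ _ h)
  | lam _ ih => exact .lam (ih (Ctx.subset_cons hsub))
  | app hd _ _ ih₁ ih₂ =>
      rw [← Ctx.union_diff (Ctx.subset_union_left.trans hsub)]
      exact .app Ctx.disj_diff (ih₁ (.refl _))
        (ih₂ (Ctx.subset_diff hd ((Ctx.subset_union_right hd).trans hsub)))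
  | one => exact .one
  | zero => exact .zero
  | coin => exact .coin
  | ite hd _ _ _ ihc iha ihb =>
      rw [← Ctx.union_diff (Ctx.subset_union_left.trans hsub)]
      have hsub₂ := Ctx.subset_diff hd ((Ctx.subset_union_right hd).trans hsub)
      exact .ite Ctx.disj_diff (ihc (.refl _)) (iha hsub₂) (ihb hsub₂)

theorem lift_at (h : SubTy Γ t A) (d : Nat) : SubTy (Ctx.liftAt d Γ) (lift d t) A := by
  induction h generalizing d with
  | @var Γ n A h =>
      by_cases hn : n < d
      · simpa [lift, hn] using SubTy.var (by rwa [Ctx.liftAt_apply_of_lt hn])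
      · simpa [lift, hn] using SubTy.var (by rwa [Ctx.liftAt_apply_succ (not_lt.1 hn)])
  | lam _ ih => exact .lam (by rw [← Ctx.liftAt_cons_succ]; exact ih (d + 1))
  | app hd _ _ ih₁ ih₂ =>
      rw [Ctx.liftAt_union]; exact .app (Ctx.liftAt_disj d hd) (ih₁ d) (ih₂ d)
  | one => exact .one
  | zero => exact .zero
  | coin => exact .coin
  | ite hd _ _ _ ihc iha ihb =>
      rw [Ctx.liftAt_union]; exact .ite (Ctx.liftAt_disj d hd) (ihc d) (iha d) (ihb d)

/-- The substitution lemma at an arbitrary index; when `Γ k = none` the hypothesis on `r` is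
vacuous and it is strengthening. -/
theorem subst_at (h : SubTy Γ t B) {k : Nat} (hr : ∀ A, Γ k = some A → SubTy Δ r A)
    (hΔ : Ctx.disj (Ctx.remove Γ k) Δ) :
    SubTy (Ctx.union (Ctx.remove Γ k) Δ) (subst t k r) B := by
  induction h generalizing k Δ r with
  | @var Γ n B h =>
      by_cases hnk : n = k
      · subst hnk
        simpa [subst] using (hr B h).weaken (Ctx.subset_union_right hΔ)
      by_cases hlt : k < n
      · simpa [subst, hnk, hlt] using
          SubTy.var (Ctx.subset_union_left _ _ (by rwa [Ctx.remove_apply_pred hlt]))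
      · simpa [subst, hnk, hlt] using
          SubTy.var (Ctx.subset_union_left _ _ (by rwa [Ctx.remove_apply_of_lt (by omega)]))
  | @lam Γ _ _ _ _ ih =>
      have hr' : ∀ A, Γ k = some A → SubTy (Ctx.cons none Δ) (lift 0 r) A := fun A hA => by
        rw [← Ctx.liftAt_zero]; exact (hr A hA).lift_at 0
      have := ih (k := k + 1) hr' (by rw [Ctx.remove_cons_succ]; exact Ctx.disj_cons_none hΔ)
      rw [Ctx.remove_cons_succ, Ctx.union_cons_none] at this
      exact .lam this
  | app hd _ _ ih₁ ih₂ =>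
      obtain ⟨Δ₁, Δ₂, ⟨hr₁, hΔ₁⟩, ⟨hr₂, hΔ₂⟩, hd', heq⟩ :=
        Ctx.exists_split_remove (P := fun Δ A => SubTy Δ r A) hd hr hΔ
      rw [← heq]; exact .app hd' (ih₁ hr₁ hΔ₁) (ih₂ hr₂ hΔ₂)
  | one => exact .one
  | zero => exact .zero
  | coin => exact .coin
  | ite hd _ _ _ ihc iha ihb =>
      obtain ⟨Δ₁, Δ₂, ⟨hr₁, hΔ₁⟩, ⟨hr₂, hΔ₂⟩, hd', heq⟩ :=
        Ctx.exists_split_remove (P := fun Δ A => SubTy Δ r A) hd hr hΔ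
      rw [← heq]; exact .ite hd' (ihc hr₁ hΔ₁) (iha hr₂ hΔ₂) (ihb hr₂ hΔ₂)

theorem subst_zero (h : SubTy (Ctx.cons (some A) Γ) t B) (hr : SubTy Δ r A)
    (hd : Ctx.disj Γ Δ) : SubTy (Ctx.union Γ Δ) (subst t 0 r) B :=
  h.subst_at (k := 0) (fun _ hA => by cases hA; exact hr) hd

end SubTy

theorem subaffine_subject_reduction {Γ : Ctx} {t : Tm} {A : Ty} {p : ℚ} {r : Tm}
    (ht : SubTy Γ t A) (h : Step t p r) : SubTy Γ r A := by
  induction h generalizing Γ A with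
  | beta => cases ht with | app hd hf ha => cases hf with | lam hf => exact hf.subst_zero ha hd
  | iteOne => cases ht with | ite hd _ ha _ => exact ha.weaken (Ctx.subset_union_right hd)
  | iteZero => cases ht with | ite hd _ _ hb => exact hb.weaken (Ctx.subset_union_right hd)
  | coinOne => cases ht; exact .one
  | coinZero => cases ht; exact .zero
  | lam _ ih => cases ht with | lam hbody => exact .lam (ih hbody)
  | appL _ _ ih => cases ht with | app hd hf ha => exact .app hd (ih hf) ha
  | appR _ _ ih => cases ht with | app hd hf ha => exact .app hd hf (ih ha)
  | iteC _ _ _ ih => cases ht with | ite hd hc ha hb => exact .ite hd (ih hc) ha hb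
  | iteA _ _ _ ih => cases ht with | ite hd hc ha hb => exact .ite hd hc (ih ha) hb
  | iteB _ _ _ ih => cases ht with | ite hd hc ha hb => exact .ite hd hc ha (ih hb)
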